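/- Let (X, 𝒰, ∫) be a Daniell space and let f_1, f_2, … ∈ 𝒰*. If ∑_{n=1}^∞ ∫|f_n| < ∞, then there exists f ∈ 𝒰* such that f(x) = ∑_{n=1}^∞ f_n(x) for every x ∈ X at which ∑_{n=1}^∞ |f_n(x)| < ∞ (i.e., f ≃ f_1 + f_2 + ⋯ with f_n ∈ 𝒰*). -/

import Mathlib

open Filter Topology

/-- A Daniell space: a Riesz space `U` of real-valued functions on `X` together with a
positive linear functional `integral` satisfying the Daniell continuity condition (II). -/
structure DaniellSpace (X : Type*) where
  U : Set (X → ℝ)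
  integral : (X → ℝ) → ℝ
  zero_mem : (0 : X → ℝ) ∈ U
  add_mem : ∀ {f g : X → ℝ}, f ∈ U → g ∈ U → f + g ∈ U
  smul_mem : ∀ (c : ℝ) {f : X → ℝ}, f ∈ U → c • f ∈ U
  sup_mem : ∀ {f g : X → ℝ}, f ∈ U → g ∈ U → f ⊔ g ∈ U
  inf_mem : ∀ {f g : X → ℝ}, f ∈ U → g ∈ U → f ⊓ g ∈ U
  integral_add : ∀ {f g : X → ℝ}, f ∈ U → g ∈ U →
    integral (f + g) = integral f + integral g
  integral_smul : ∀ (c : ℝ) {f : X → ℝ}, f ∈ U → integral (c • f) = c * integral f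
  integral_nonneg : ∀ {f : X → ℝ}, f ∈ U → (∀ x, 0 ≤ f x) → 0 ≤ integral f
  integral_tendsto_zero : ∀ f : ℕ → X → ℝ, (∀ n, f n ∈ U) → Antitone f →
    (∀ x, Tendsto (fun n => f n x) atTop (𝓝 (0 : ℝ))) →
    Tendsto (fun n => integral (f n)) atTop (𝓝 (0 : ℝ))

/-- `f ≃ ∑ fₙ` : the `fₙ` belong to `U`, `∑ ∫|fₙ| < ∞`, and `f x = ∑ fₙ x` at every
point where the series converges absolutely. -/
def DaniellSpace.Rep {X : Type*} (D : DaniellSpace X) (f : X → ℝ) (fs : ℕ → X → ℝ) : Prop :=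
  (∀ n, fs n ∈ D.U) ∧ (Summable fun n => D.integral |fs n|) ∧
  ∀ x, (Summable fun n => |fs n x|) → HasSum (fun n => fs n x) (f x)

/-- The extension `𝒰*` of `𝒰`. -/
def DaniellSpace.Ustar {X : Type*} (D : DaniellSpace X) : Set (X → ℝ) :=
  {f | ∃ fs, D.Rep f fs}

-- The integral on `𝒰*`: `∫ f = ∑ ∫ fₙ` for any representation `f ≃ ∑ fₙ`
-- (the value is independent of the representation).
open Classical in
noncomputable def DaniellSpace.integralStar {X : Type*} (D : DaniellSpace X)
    (f : X → ℝ) : ℝ :=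
  if h : ∃ fs, D.Rep f fs then ∑' n, D.integral (h.choose n) else 0

/-- A Daniell space is complete if `f ≃ ∑ fₙ` with all `fₙ ∈ 𝒰` implies `f ∈ 𝒰`. -/
def DaniellSpace.Complete {X : Type*} (D : DaniellSpace X) : Prop :=
  ∀ (f : X → ℝ) (fs : ℕ → X → ℝ), D.Rep f fs → f ∈ D.U

/-- A null set: its characteristic function is a null function. -/
def DaniellSpace.NullSet {X : Type*} (D : DaniellSpace X) (S : Set X) : Prop :=
  S.indicator (fun _ => (1 : ℝ)) ∈ D.U ∧ D.integral (S.indicator fun _ => (1 : ℝ)) = 0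

/-!
For each `n` choose a representation `fₙ ≃ ∑ₖ gₙₖ` with `∑ₖ ∫|gₙₖ| ≤ ∫|fₙ| + 2⁻ⁿ`; the double
family `(gₙₖ)` then has summable integrals and represents `∑ₙ fₙ`. Such representations exist
because `|f| ∈ 𝒰*` and because condition (II) gives `∫u ≤ ∑ ∫wₖ` whenever `u ≤ ∑ wₖ`
with `wₖ ≥ 0`: this bounds `∫|∑_{k<N} gₖ|` by `∫|f|` up to tails of the series, so replacing the
head of a representation by a single partial sum makes its total `∑ ∫|gₖ|` close to `∫|f|`.
-/

open Finset

lemma tendsto_max_sub_sum_range_zero {w : ℕ → ℝ} {u : ℝ} (hw : ∀ k, 0 ≤ w k)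
    (hle : Summable w → u ≤ ∑' k, w k) :
    Tendsto (fun m => max (u - ∑ k ∈ range m, w k) 0) atTop (𝓝 0) := by
  by_cases hs : Summable w
  · have := (tendsto_const_nhds (x := u)).sub hs.hasSum.tendsto_sum_nat |>.max
      (tendsto_const_nhds (x := (0 : ℝ)))
    rwa [max_eq_right (sub_nonpos.2 (hle hs))] at this
  · refine tendsto_const_nhds.congr' ?_
    filter_upwards [((not_summable_iff_tendsto_nat_atTop_of_nonneg hw).1 hs).eventually_ge_atTop u]
      with m hm
    exact (max_eq_right (by linarith)).symm

lemma abs_sub_sum_range_le_tsum_abs {a : ℕ → ℝ} {s : ℝ} (ha : HasSum a s)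
    (habs : Summable fun k => |a k|) (N : ℕ) :
    |s - ∑ k ∈ range N, a k| ≤ ∑' j, |a (j + N)| := by
  have htail : Summable fun j => ‖a (j + N)‖ :=
    (summable_nat_add_iff (f := fun k => |a k|) N).2 habs
  rw [← ha.tsum_eq, ← ha.summable.sum_add_tsum_nat_add N, add_sub_cancel_left]
  exact norm_tsum_le_tsum_norm htail

namespace DaniellSpace

variable {X : Type*} (D : DaniellSpace X)

lemma neg_mem {f : X → ℝ} (hf : f ∈ D.U) : -f ∈ D.U := by
  simpa using D.smul_mem (-1) hf

lemma sub_mem {f g : X → ℝ} (hf : f ∈ D.U) (hg : g ∈ D.U) : f - g ∈ D.U := by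
  simpa only [sub_eq_add_neg] using D.add_mem hf (D.neg_mem hg)

lemma abs_mem {f : X → ℝ} (hf : f ∈ D.U) : |f| ∈ D.U :=
  D.sup_mem hf (D.neg_mem hf)

lemma sum_range_mem {g : ℕ → X → ℝ} (hg : ∀ k, g k ∈ D.U) (n : ℕ) :
    ∑ k ∈ range n, g k ∈ D.U :=
  Finset.sum_induction _ (· ∈ D.U) (fun _ _ => D.add_mem) D.zero_mem fun k _ => hg k

lemma integral_zero : D.integral 0 = 0 := by
  simpa using D.integral_smul 0 D.zero_mem

lemma integral_neg {f : X → ℝ} (hf : f ∈ D.U) : D.integral (-f) = -D.integral f := by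
  simpa using D.integral_smul (-1) hf

lemma integral_sub {f g : X → ℝ} (hf : f ∈ D.U) (hg : g ∈ D.U) :
    D.integral (f - g) = D.integral f - D.integral g := by
  rw [sub_eq_add_neg, D.integral_add hf (D.neg_mem hg), D.integral_neg hg, sub_eq_add_neg]

lemma integral_sum_range {g : ℕ → X → ℝ} (hg : ∀ k, g k ∈ D.U) (n : ℕ) :
    D.integral (∑ k ∈ range n, g k) = ∑ k ∈ range n, D.integral (g k) := by
  induction n with
  | zero => simpa using D.integral_zero
  | succ n ih =>
    rw [sum_range_succ, sum_range_succ, D.integral_add (D.sum_range_mem hg n) (hg n), ih]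

lemma integral_mono {f g : X → ℝ} (hf : f ∈ D.U) (hg : g ∈ D.U) (hfg : ∀ x, f x ≤ g x) :
    D.integral f ≤ D.integral g := by
  have := D.integral_nonneg (D.sub_mem hg hf) fun x => sub_nonneg.2 (hfg x)
  rw [D.integral_sub hg hf] at this
  linarith

lemma integral_abs_nonneg {f : X → ℝ} (hf : f ∈ D.U) : 0 ≤ D.integral |f| :=
  D.integral_nonneg (D.abs_mem hf) fun x => abs_nonneg (f x)

lemma abs_integral_le {f : X → ℝ} (hf : f ∈ D.U) : |D.integral f| ≤ D.integral |f| := by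
  have hle := D.integral_mono hf (D.abs_mem hf) fun x => le_abs_self (f x)
  have hneg := D.integral_mono (D.neg_mem hf) (D.abs_mem hf) fun x => neg_le_abs (f x)
  rw [D.integral_neg hf] at hneg
  exact abs_le.2 ⟨by linarith, hle⟩

lemma integral_le_tsum_of_le_tsum {u : X → ℝ} {w : ℕ → X → ℝ} (hu : u ∈ D.U)
    (hwU : ∀ k, w k ∈ D.U) (hw0 : ∀ k x, 0 ≤ w k x) (hws : Summable fun k => D.integral (w k))
    (hle : ∀ x, (Summable fun k => w k x) → u x ≤ ∑' k, w k x) :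
    D.integral u ≤ ∑' k, D.integral (w k) := by
  set S : ℕ → X → ℝ := fun m => ∑ k ∈ range m, w k
  have hS : ∀ m x, S m x = ∑ k ∈ range m, w k x := fun m x => Finset.sum_apply x _ _
  set v : ℕ → X → ℝ := fun m => (u - S m) ⊔ 0
  have hSU : ∀ m, S m ∈ D.U := D.sum_range_mem hwU
  have hvU : ∀ m, v m ∈ D.U := fun m => D.sup_mem (D.sub_mem hu (hSU m)) D.zero_mem
  have hv_anti : Antitone v := antitone_nat_of_succ_le fun m x => by
    simp only [v, Pi.sup_apply, Pi.sub_apply, Pi.zero_apply, hS, sum_range_succ]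
    exact max_le_max (by linarith [hw0 m x]) le_rfl
  have hv_lim : ∀ x, Tendsto (fun m => v m x) atTop (𝓝 0) := fun x => by
    simpa only [v, Pi.sup_apply, Pi.sub_apply, Pi.zero_apply, hS] using
      tendsto_max_sub_sum_range_zero (hw0 · x) (hle x)
  have hbound : ∀ m, D.integral u ≤ D.integral (v m) + ∑ k ∈ range m, D.integral (w k) := by
    intro m
    rw [← D.integral_sum_range hwU, ← D.integral_add (hvU m) (hSU m)]
    refine D.integral_mono hu (D.add_mem (hvU m) (hSU m)) fun x => ?_
    simp only [v, Pi.add_apply, Pi.sup_apply, Pi.sub_apply, Pi.zero_apply]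
    linarith [le_max_left (u x - S m x) 0]
  have hlim := (D.integral_tendsto_zero v hvU hv_anti hv_lim).add hws.hasSum.tendsto_sum_nat
  rw [zero_add] at hlim
  exact ge_of_tendsto' hlim hbound

variable {ι κ : Type*}

/-- `f ≃ ∑ gᵢ` for a family indexed by an arbitrary type; `D.Rep` is the case `ι = ℕ`. -/
def IsRep (f : X → ℝ) (g : ι → X → ℝ) : Prop :=
  (∀ i, g i ∈ D.U) ∧ (Summable fun i => D.integral |g i|) ∧
    ∀ x, (Summable fun i => |g i x|) → HasSum (fun i => g i x) (f x)

lemma isRep_comp_equiv {f : X → ℝ} {g : ι → X → ℝ} (e : κ ≃ ι) :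
    D.IsRep f (g ∘ e) ↔ D.IsRep f g := by
  refine and_congr ?_ (and_congr (e.summable_iff (f := fun i => D.integral |g i|)) ?_)
  · exact ⟨fun h i => e.apply_symm_apply i ▸ h (e.symm i), fun h k => h (e k)⟩
  · exact forall_congr' fun x =>
      imp_congr (e.summable_iff (f := fun i => |g i x|)) (e.hasSum_iff (f := fun i => g i x))

variable {D} in
lemma IsRep.mem_Ustar [Denumerable ι] {f : X → ℝ} {g : ι → X → ℝ} (h : D.IsRep f g) :
    f ∈ D.Ustar :=
  ⟨g ∘ (Denumerable.eqv ι).symm, (D.isRep_comp_equiv _).2 h⟩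

variable {D} in
lemma IsRep.sum_elim {f f' : X → ℝ} {g : ι → X → ℝ} {a : κ → X → ℝ} (hg : D.IsRep f g)
    (haU : ∀ k, a k ∈ D.U) (haS : Summable fun k => D.integral |a k|)
    (ha : ∀ x, (Summable fun i => |g i x|) → HasSum (fun k => a k x) (f' x - f x)) :
    D.IsRep f' (Sum.elim g a) := by
  obtain ⟨hgU, hgS, hgP⟩ := hg
  refine ⟨Sum.forall.2 ⟨hgU, haU⟩, ?_, fun x hx => ?_⟩
  · exact Summable.sum (fun j => D.integral |Sum.elim g a j|) hgS haS
  · have hgx : Summable fun i => |g i x| :=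
      hx.comp_injective (f := fun j => |Sum.elim g a j x|) Sum.inl_injective
    have := HasSum.sum (f := fun j => Sum.elim g a j x) (hgP x hgx) (ha x hgx)
    rwa [add_sub_cancel] at this

lemma isRep_tsum_uncurry {f : ι → X → ℝ} {G : ι → κ → X → ℝ} (hG : ∀ i, D.IsRep (f i) (G i))
    (hS : Summable fun i => ∑' k, D.integral |G i k|) :
    D.IsRep (fun x => ∑' i, f i x) (Function.uncurry G) := by
  refine ⟨fun p => (hG p.1).1 p.2, ?_, fun x hx => ?_⟩
  · exact (summable_prod_of_nonneg fun p => D.integral_abs_nonneg ((hG p.1).1 p.2)).2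
      ⟨fun i => (hG i).2.1, hS⟩
  · have hrow := ((summable_prod_of_nonneg fun p => abs_nonneg (Function.uncurry G p x)).1 hx).1
    have htot := (Summable.of_abs hx).hasSum
    have hfib := htot.prod_fiberwise fun i => (hG i).2.2 x (hrow i)
    simpa only [hfib.tsum_eq] using htot

/- With `Sₘ = ∑_{k<m} gₖ`, the increments `sₖ = |Sₖ₊₁| - |Sₖ|` sum to `|f|`, but absolute
convergence of `∑ sₖ` does not force that of `∑ gₖ`; interleaving `g` with `s - g` does. -/
lemma abs_mem_Ustar {f : X → ℝ} {g : ℕ → X → ℝ} (hg : D.Rep f g) : |f| ∈ D.Ustar := by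
  have ⟨hgU, hgS, hgP⟩ := hg
  set S : ℕ → X → ℝ := fun m => ∑ k ∈ range m, g k
  have hS : ∀ m x, S m x = ∑ k ∈ range m, g k x := fun m x => Finset.sum_apply x _ _
  set s : ℕ → X → ℝ := fun k => |S (k + 1)| - |S k|
  have hsU : ∀ k, s k ∈ D.U := fun k =>
    D.sub_mem (D.abs_mem (D.sum_range_mem hgU _)) (D.abs_mem (D.sum_range_mem hgU _))
  have hs_le : ∀ k x, |s k x| ≤ |g k x| := fun k x => by
    have hinc : S (k + 1) x - S k x = g k x := by rw [hS, hS, sum_range_succ]; ring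
    show |(|S (k + 1) x| - |S k x|)| ≤ _
    exact hinc ▸ abs_abs_sub_abs_le_abs_sub (S (k + 1) x) (S k x)
  have hdiff_le : ∀ k x, |(s k - g k) x| ≤ (2 : ℝ) * |g k x| := fun k x =>
    (abs_sub (s k x) (g k x)).trans (by linarith [hs_le k x])
  have hdiffU : ∀ k, s k - g k ∈ D.U := fun k => D.sub_mem (hsU k) (hgU k)
  have hdiffS : Summable fun k => D.integral |s k - g k| := by
    refine (hgS.mul_left 2).of_nonneg_of_le (fun k => D.integral_abs_nonneg (hdiffU k))
      fun k => ?_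
    rw [← D.integral_smul 2 (D.abs_mem (hgU k))]
    exact D.integral_mono (D.abs_mem (hdiffU k)) (D.smul_mem 2 (D.abs_mem (hgU k))) (hdiff_le k)
  refine (IsRep.sum_elim hg (a := fun k => s k - g k) hdiffU hdiffS ?_).mem_Ustar
  intro x hx
  have hfx := hgP x hx
  have hsx : Summable fun k => s k x :=
    .of_norm_bounded hx fun k => hs_le k x
  have hpartial : ∀ m, ∑ k ∈ range m, s k x = |S m x| := fun m => by
    simp only [s, Pi.sub_apply, Pi.abs_apply]
    rw [sum_range_sub (fun k => |S k x|), hS 0, sum_range_zero, abs_zero, sub_zero]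
  have hsum_s : HasSum (fun k => s k x) |f x| :=
    hsx.hasSum_iff_tendsto_nat.2 <| by
      simpa only [hpartial, hS] using hfx.tendsto_sum_nat.abs
  exact hsum_s.sub hfx

def groupHead (g : ℕ → X → ℝ) (N : ℕ) : ℕ → X → ℝ
  | 0 => ∑ k ∈ range N, g k
  | j + 1 => g (j + N)

variable {D} in
lemma Rep.groupHead {f : X → ℝ} {g : ℕ → X → ℝ} (hg : D.Rep f g) (N : ℕ) :
    D.Rep f (groupHead g N) := by
  obtain ⟨hgU, hgS, hgP⟩ := hg
  refine ⟨?_, ?_, fun x hx => ?_⟩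
  · rintro (_ | j)
    exacts [D.sum_range_mem hgU N, hgU _]
  · exact (summable_nat_add_iff 1).1 ((summable_nat_add_iff N).2 hgS)
  · have htail : Summable fun j => |g (j + N) x| := (summable_nat_add_iff 1).2 hx
    have hfx := hgP x ((summable_nat_add_iff N).1 htail)
    refine (hasSum_nat_add_iff' 1).1 ?_
    rw [sum_range_one]
    change HasSum (fun j => g (j + N) x) (f x - (∑ k ∈ range N, g k) x)
    simpa only [Finset.sum_apply] using (hasSum_nat_add_iff' N).2 hfx

lemma integral_abs_sum_range_le {f : X → ℝ} {g h : ℕ → X → ℝ} (hg : D.Rep f g)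
    (hh : D.Rep |f| h) (N : ℕ) :
    D.integral |∑ k ∈ range N, g k| ≤ ∑ k ∈ range N, D.integral (h k) +
      ∑' j, D.integral |h (j + N)| + ∑' j, D.integral |g (j + N)| := by
  obtain ⟨hgU, hgS, hgP⟩ := hg
  obtain ⟨hhU, hhS, hhP⟩ := hh
  set w : ℕ → X → ℝ := fun j => |h (j + N)| + |g (j + N)|
  have hwU : ∀ j, w j ∈ D.U := fun j => D.add_mem (D.abs_mem (hhU _)) (D.abs_mem (hgU _))
  have hhS' : Summable fun j => D.integral |h (j + N)| := (summable_nat_add_iff N).2 hhS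
  have hgS' : Summable fun j => D.integral |g (j + N)| := (summable_nat_add_iff N).2 hgS
  have hwI : ∀ j, D.integral (w j) = D.integral |h (j + N)| + D.integral |g (j + N)| :=
    fun j => D.integral_add (D.abs_mem (hhU _)) (D.abs_mem (hgU _))
  have key := D.integral_le_tsum_of_le_tsum
    (D.sub_mem (D.abs_mem (D.sum_range_mem hgU N)) (D.sum_range_mem hhU N)) hwU
    (fun j x => add_nonneg (abs_nonneg _) (abs_nonneg _))
    ((hhS'.add hgS').congr fun j => (hwI j).symm) ?_
  · rw [D.integral_sub (D.abs_mem (D.sum_range_mem hgU N)) (D.sum_range_mem hhU N),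
      D.integral_sum_range hhU, tsum_congr hwI, hhS'.tsum_add hgS'] at key
    linarith
  intro x hwx
  have hhx : Summable fun j => |h (j + N) x| :=
    hwx.of_nonneg_of_le (fun j => abs_nonneg _) fun j =>
      le_add_of_nonneg_right (abs_nonneg (g (j + N) x))
  have hgx : Summable fun j => |g (j + N) x| :=
    hwx.of_nonneg_of_le (fun j => abs_nonneg _) fun j =>
      le_add_of_nonneg_left (abs_nonneg (h (j + N) x))
  have hgx' := (summable_nat_add_iff (f := fun k => |g k x|) N).1 hgx
  have hhx' := (summable_nat_add_iff (f := fun k => |h k x|) N).1 hhx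
  have hg_est := abs_sub_sum_range_le_tsum_abs (hgP x hgx') hgx' N
  have hh_est := abs_sub_sum_range_le_tsum_abs (hhP x hhx') hhx' N
  have hwx_eq : ∑' j, w j x = ∑' j, |h (j + N) x| + ∑' j, |g (j + N) x| := hhx.tsum_add hgx
  simp only [Pi.sub_apply, Pi.abs_apply, Finset.sum_apply] at hg_est hh_est ⊢
  rw [hwx_eq]
  linarith [abs_sub_abs_le_abs_sub (∑ k ∈ range N, g k x) (f x), abs_le.1 hh_est,
    abs_sub_comm (∑ k ∈ range N, g k x) (f x)]

lemma exists_rep_tsum_integral_abs_le {f : X → ℝ} {g h : ℕ → X → ℝ} (hg : D.Rep f g)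
    (hh : D.Rep |f| h) {ε : ℝ} (hε : 0 < ε) :
    ∃ g' : ℕ → X → ℝ, D.Rep f g' ∧ ∑' k, D.integral |g' k| ≤ ∑' k, D.integral (h k) + ε := by
  have hhI : Summable fun k => D.integral (h k) :=
    .of_norm_bounded hh.2.1 fun k => D.abs_integral_le (hh.1 k)
  have hε4 : 0 < ε / 4 := by positivity
  obtain ⟨N, hgN, hhN, hpartial⟩ :=
    (((tendsto_sum_nat_add fun k => D.integral |g k|).eventually (gt_mem_nhds hε4)).and
      (((tendsto_sum_nat_add fun k => D.integral |h k|).eventually (gt_mem_nhds hε4)).and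
        (hhI.hasSum.tendsto_sum_nat.eventually (gt_mem_nhds (lt_add_of_pos_right _ hε4))))).exists
  have hrep := hg.groupHead N
  refine ⟨groupHead g N, hrep, ?_⟩
  rw [hrep.2.1.tsum_eq_zero_add]
  change D.integral |∑ k ∈ range N, g k| + ∑' j, D.integral |g (j + N)| ≤ _
  linarith [D.integral_abs_sum_range_le hg hh N]

lemma exists_rep_tsum_integral_abs_le_integralStar {f : X → ℝ} (hf : f ∈ D.Ustar) {ε : ℝ}
    (hε : 0 < ε) :
    ∃ g : ℕ → X → ℝ, D.Rep f g ∧ ∑' k, D.integral |g k| ≤ D.integralStar |f| + ε := by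
  obtain ⟨g, hg⟩ := hf
  have habs : ∃ h, D.Rep |f| h := D.abs_mem_Ustar hg
  rw [integralStar, dif_pos habs]
  exact D.exists_rep_tsum_integral_abs_le hg habs.choose_spec hε

end DaniellSpace

theorem daniell_Ustar_exists_sum_general {X : Type*} (D : DaniellSpace X)
    (fs : ℕ → X → ℝ) (hfs : ∀ n, fs n ∈ D.Ustar)
    (hsum : Summable fun n => D.integralStar |fs n|) :
    ∃ f : X → ℝ, f ∈ D.Ustar ∧
      ∀ x, (Summable fun n => |fs n x|) → HasSum (fun n => fs n x) (f x) := by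
  choose G hG hG_le using fun n =>
    D.exists_rep_tsum_integral_abs_le_integralStar (hfs n) (pow_pos one_half_pos n)
  have hG_sum : Summable fun n => ∑' k, D.integral |G n k| :=
    (hsum.add summable_geometric_two).of_nonneg_of_le
      (fun n => tsum_nonneg fun k => D.integral_abs_nonneg ((hG n).1 k)) hG_le
  exact ⟨_, (D.isRep_tsum_uncurry hG hG_sum).mem_Ustar, fun x hx => hx.of_abs.hasSum⟩

/-- If `fₙ ∈ 𝒰*` and `∑ ∫|fₙ| < ∞`, then there exists `f ∈ 𝒰*` with
`f ≃ f₁ + f₂ + ⋯`, i.e. `f x = ∑ fₙ x` at every point of absolute convergence. -/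
theorem daniell_Ustar_exists_sum {X : Type*} [Nonempty X] (D : DaniellSpace X)
    (fs : ℕ → X → ℝ) (hfs : ∀ n, fs n ∈ D.Ustar)
    (hsum : Summable fun n => D.integralStar |fs n|) :
    ∃ f : X → ℝ, f ∈ D.Ustar ∧
      ∀ x, (Summable fun n => |fs n x|) → HasSum (fun n => fs n x) (f x) :=
  daniell_Ustar_exists_sum_general D fs hfs hsum
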